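/- arXiv:1707.09027 — 3 statements merged into one kernel-verified Lean document; each statement's English description precedes it below -/
import Mathlib

section
/- Let G be a P-group and B a symmetric subset of G. If B is functionally balanced, then every equivalence relation ε in the trace of the left uniformity on B having at most 𝔠 (continuum) equivalence classes belongs to the trace of the right uniformity on B. -/
open Filter Set Topology Pointwise

universe u v

/-- A P-space: countable intersections of open sets are open. -/
def IsPSpace (X : Type*) [TopologicalSpace X] : Prop :=
  ∀ s : ℕ → Set X, (∀ n, IsOpen (s n)) → IsOpen (⋂ n, s n)

/-- A uniform P-space: countable intersections of entourages are entourages. -/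
def IsUniformPSpace (X : Type*) [UniformSpace X] : Prop :=
  ∀ s : ℕ → Set (X × X), (∀ n, s n ∈ uniformity X) → (⋂ n, s n) ∈ uniformity X

/-- The left uniformity of a topological group, as a filter on `G × G`. -/
def leftUnif (G : Type*) [Group G] [TopologicalSpace G] : Filter (G × G) :=
  Filter.comap (fun p : G × G => p.1⁻¹ * p.2) (nhds 1)

/-- The right uniformity of a topological group, as a filter on `G × G`. -/
def rightUnif (G : Type*) [Group G] [TopologicalSpace G] : Filter (G × G) :=
  Filter.comap (fun p : G × G => p.1 * p.2⁻¹) (nhds 1)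

/-- The two-sided uniformity (supremum of left and right uniformities). -/
def twoSidedUnif (G : Type*) [Group G] [TopologicalSpace G] : Filter (G × G) :=
  leftUnif G ⊓ rightUnif G

/-- `ε` belongs to the trace of the filter `μ` on the subset `B`. -/
def MemTrace {G : Type*} (μ : Filter (G × G)) (B : Set G) (ε : Set (G × G)) : Prop :=
  ∃ δ ∈ μ, δ ∩ B ×ˢ B = ε ∩ B ×ˢ B

/-- `f : B → ℝ` is uniformly continuous for the trace on `B` of the filter `μ` on `G × G`. -/
def UCOn {G : Type*} (μ : Filter (G × G)) (B : Set G) (f : B → ℝ) : Prop :=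
  ∀ e : ℝ, 0 < e → ∃ δ ∈ μ, ∀ x y : B, ((x : G), (y : G)) ∈ δ → |f x - f y| < e

/-- `ε` is an equivalence relation on the subset `B`. -/
def IsEquivOn {G : Type*} (B : Set G) (ε : Set (G × G)) : Prop :=
  (∀ x ∈ B, (x, x) ∈ ε) ∧ (∀ x ∈ B, ∀ y ∈ B, (x, y) ∈ ε → (y, x) ∈ ε) ∧
    (∀ x ∈ B, ∀ y ∈ B, ∀ z ∈ B, (x, y) ∈ ε → (y, z) ∈ ε → (x, z) ∈ ε)

/-- The relation `ε` has at most `c` equivalence classes on `B`. -/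
def ClassesLE {G : Type*} (B : Set G) (ε : Set (G × G)) (c : Cardinal) : Prop :=
  Cardinal.mk ↥(Set.range fun x : B => {y : B | ((x : G), (y : G)) ∈ ε}) ≤ c

/-- The symmetric subset `B` of a topological group `G` is functionally balanced. -/
def FunBalancedOn (G : Type*) [Group G] [TopologicalSpace G] (B : Set G) : Prop :=
  ∀ f : B → ℝ, (∃ M : ℝ, ∀ x : B, |f x| ≤ M) →
    UCOn (leftUnif G) B f → UCOn (rightUnif G) B f

/-- The symmetric subset `B` of a topological group `G` is strongly functionally balanced. -/
def StronglyFunBalancedOn (G : Type*) [Group G] [TopologicalSpace G] (B : Set G) : Prop :=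
  ∀ f : B → ℝ, UCOn (leftUnif G) B f → UCOn (rightUnif G) B f

/-- A non-archimedean topological group: open subgroups form a base at the identity. -/
def IsNonArchGroup (G : Type*) [Group G] [TopologicalSpace G] : Prop :=
  ∀ U ∈ nhds (1 : G), ∃ H : Subgroup G, IsOpen (H : Set G) ∧ (H : Set G) ⊆ U

/-- Words of length at most `n` in the free group. -/
def Bword (X : Type*) [DecidableEq X] (n : ℕ) : Set (FreeGroup X) :=
  {w : FreeGroup X | w.toWord.length ≤ n}

/-- The given group topology on `FreeGroup X` makes it the uniform free topological group
over the uniform space `X`: the canonical map is uniformly continuous (for the two-sided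
uniformity) and every uniformly continuous map to a topological group extends to a
continuous homomorphism. -/
def IsUniformFreeTopGroup (X : Type u) [UniformSpace X] [TopologicalSpace (FreeGroup X)]
    [IsTopologicalGroup (FreeGroup X)] : Prop :=
  Filter.Tendsto (Prod.map (FreeGroup.of : X → FreeGroup X) FreeGroup.of) (uniformity X)
      (twoSidedUnif (FreeGroup X)) ∧
    ∀ (G : Type u) [Group G] [TopologicalSpace G] [IsTopologicalGroup G] (φ : X → G),
      Filter.Tendsto (Prod.map φ φ) (uniformity X) (twoSidedUnif G) →
        Continuous ⇑(FreeGroup.lift φ)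

/-- The given group topology on `FreeGroup X` makes it the free non-archimedean balanced
topological group over the uniform space `X`. -/
def IsFreeNABalancedGroup (X : Type u) [UniformSpace X] [TopologicalSpace (FreeGroup X)]
    [IsTopologicalGroup (FreeGroup X)] : Prop :=
  IsNonArchGroup (FreeGroup X) ∧ leftUnif (FreeGroup X) = rightUnif (FreeGroup X) ∧
    Filter.Tendsto (Prod.map (FreeGroup.of : X → FreeGroup X) FreeGroup.of) (uniformity X)
      (twoSidedUnif (FreeGroup X)) ∧
    ∀ (G : Type u) [Group G] [TopologicalSpace G] [IsTopologicalGroup G] (φ : X → G),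
      IsNonArchGroup G → leftUnif G = rightUnif G →
      Filter.Tendsto (Prod.map φ φ) (uniformity X) (twoSidedUnif G) →
        Continuous ⇑(FreeGroup.lift φ)

/-!
The at most `𝔠` classes of `ε` embed into a bounded interval of `ℝ`, which gives a bounded
`f : B → ℝ` whose level sets are exactly the `ε`-classes. Since `ε` is in the left trace, `f` is
left uniformly continuous, hence right uniformly continuous by functional balance. In a P-group
the right uniformity is closed under countable intersections, so intersecting the right
entourages witnessing `|f x - f y| < 1 / (n + 1)` gives a single right entourage on whose trace
`f` is constant, i.e. whose trace lies in `ε`.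
-/

theorem IsPSpace.countableInterFilter_nhds {X : Type*} [TopologicalSpace X] (hX : IsPSpace X)
    (x : X) : CountableInterFilter (𝓝 x) := by
  refine ⟨fun S hSc hS => ?_⟩
  -- `insert univ` makes the family nonempty, hence the range of a sequence, without changing `⋂₀`.
  obtain ⟨s, hs⟩ := (hSc.insert univ).exists_eq_range (insert_nonempty _ _)
  have hsx : ∀ n, s n ∈ 𝓝 x := fun n => by
    have hn : s n ∈ insert univ S := hs ▸ mem_range_self n
    rcases hn with hn | hn
    · exact hn ▸ univ_mem
    · exact hS _ hn
  choose U hUs hUo hxU using fun n => mem_nhds_iff.mp (hsx n)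
  have hSs : ⋂₀ S = ⋂ n, s n := by rw [← sInter_range, ← hs, sInter_insert, univ_inter]
  rw [hSs]
  exact mem_of_superset ((hX U hUo).mem_nhds (mem_iInter.2 hxU)) (iInter_mono hUs)

theorem IsPSpace.countableInterFilter_rightUnif {G : Type*} [Group G] [TopologicalSpace G]
    (hG : IsPSpace G) : CountableInterFilter (rightUnif G) :=
  have := hG.countableInterFilter_nhds 1
  inferInstanceAs (CountableInterFilter (comap _ _))

theorem exists_bounded_real_eq_iff_eq {α β : Type*} (c : α → β)
    (hc : Cardinal.mk (range c) ≤ Cardinal.continuum) :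
    ∃ f : α → ℝ, (∃ M : ℝ, ∀ x, |f x| ≤ M) ∧ ∀ x y, f x = f y ↔ c x = c y := by
  obtain ⟨j⟩ : Nonempty (range c ↪ ℝ) := by
    rw [← Cardinal.lift_mk_le', Cardinal.mk_real, Cardinal.lift_continuum]
    simpa using hc
  refine ⟨fun x => Real.arctan (j (rangeFactorization c x)), ⟨Real.pi / 2, fun x => ?_⟩, fun x y => ?_⟩
  · exact (abs_lt.2 ⟨Real.neg_pi_div_two_lt_arctan _, Real.arctan_lt_pi_div_two _⟩).le
  · rw [Real.arctan_injective.eq_iff, j.injective.eq_iff, Subtype.ext_iff]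
    rfl

theorem IsEquivOn.mem_iff_setOf_eq {G : Type*} {B : Set G} {ε : Set (G × G)}
    (hε : IsEquivOn B ε) (x y : B) :
    ((x : G), (y : G)) ∈ ε ↔
      {z : B | ((x : G), (z : G)) ∈ ε} = {z : B | ((y : G), (z : G)) ∈ ε} := by
  obtain ⟨hrefl, hsymm, htrans⟩ := hε
  refine ⟨fun hxy => ?_, fun h => ?_⟩
  · ext z
    exact ⟨htrans _ y.2 _ x.2 _ z.2 (hsymm _ x.2 _ y.2 hxy), htrans _ x.2 _ y.2 _ z.2 hxy⟩
  · have hy : y ∈ {z : B | ((y : G), (z : G)) ∈ ε} := hrefl _ y.2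
    rwa [← h] at hy

theorem MemTrace.ucOn_of_forall_mem_eq {G : Type*} {μ : Filter (G × G)} {B : Set G}
    {ε : Set (G × G)} (hε : MemTrace μ B ε) {f : B → ℝ}
    (hf : ∀ x y : B, ((x : G), (y : G)) ∈ ε → f x = f y) : UCOn μ B f := by
  obtain ⟨δ, hδ, hδε⟩ := hε
  refine fun e he => ⟨δ, hδ, fun x y hxy => ?_⟩
  have hxyε : ((x : G), (y : G)) ∈ ε ∩ B ×ˢ B := hδε ▸ ⟨hxy, x.2, y.2⟩
  rwa [hf x y hxyε.1, sub_self, abs_zero]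

theorem memTrace_of_inter_subset {G : Type*} {μ : Filter (G × G)} {B : Set G}
    {ε δ : Set (G × G)} (hδ : δ ∈ μ) (hδε : δ ∩ B ×ˢ B ⊆ ε) : MemTrace μ B ε :=
  ⟨δ ∪ ε, mem_of_superset hδ subset_union_left, by
    rw [union_inter_distrib_right, union_eq_right]
    exact subset_inter hδε inter_subset_right⟩

theorem UCOn.exists_mem_forall_eq {G : Type*} {μ : Filter (G × G)} [CountableInterFilter μ]
    {B : Set G} {f : B → ℝ} (hf : UCOn μ B f) :
    ∃ δ ∈ μ, ∀ x y : B, ((x : G), (y : G)) ∈ δ → f x = f y := by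
  choose D hD hDf using fun n : ℕ => hf (1 / (n + 1)) Nat.one_div_pos_of_nat
  refine ⟨⋂ n, D n, countable_iInter_mem.2 hD, fun x y hxy => ?_⟩
  by_contra hne
  obtain ⟨n, hn⟩ := exists_nat_one_div_lt (abs_pos.2 (sub_ne_zero.2 hne))
  exact (hDf n x y (mem_iInter.1 hxy n)).not_gt hn

theorem funBalanced_equivRel_mem_right_general (G : Type*) [Group G] [TopologicalSpace G]
    (hP : IsPSpace G) (B : Set G)
    (hFB : FunBalancedOn G B) (ε : Set (G × G))
    (heq : IsEquivOn B ε) (htr : MemTrace (leftUnif G) B ε)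
    (hcard : ClassesLE B ε Cardinal.continuum) :
    MemTrace (rightUnif G) B ε := by
  have := hP.countableInterFilter_rightUnif
  obtain ⟨f, hbdd, hf⟩ := exists_bounded_real_eq_iff_eq _ hcard
  have hfε : ∀ x y : B, f x = f y ↔ ((x : G), (y : G)) ∈ ε := fun x y =>
    (hf x y).trans (heq.mem_iff_setOf_eq x y).symm
  have hleft : UCOn (leftUnif G) B f := htr.ucOn_of_forall_mem_eq fun x y => (hfε x y).2
  obtain ⟨δ, hδ, hδf⟩ := (hFB f hbdd hleft).exists_mem_forall_eq
  exact memTrace_of_inter_subset hδ fun p ⟨hp, hpB⟩ =>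
    (hfε ⟨_, hpB.1⟩ ⟨_, hpB.2⟩).1 (hδf ⟨_, hpB.1⟩ ⟨_, hpB.2⟩ hp)

/-- for a functionally balanced symmetric subset `B` of a P-group, every
equivalence relation in the left trace uniformity with at most 𝔠 classes lies in the
right trace uniformity. -/
theorem funBalanced_equivRel_mem_right (G : Type*) [Group G] [TopologicalSpace G]
    [IsTopologicalGroup G] (hP : IsPSpace G) (B : Set G) (hB : B⁻¹ = B)
    (hFB : FunBalancedOn G B) (ε : Set (G × G)) (hsub : ε ⊆ B ×ˢ B)
    (heq : IsEquivOn B ε) (htr : MemTrace (leftUnif G) B ε)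
    (hcard : ClassesLE B ε Cardinal.continuum) :
    MemTrace (rightUnif G) B ε :=
  funBalanced_equivRel_mem_right_general G hP B hFB ε heq htr hcard
end

section
/- Let G be a topological group carrying a P-group topology on a free group F(X), let μ be its left (or right, or two-sided) uniformity, and for n ∈ ℕ let Bₙ ⊆ F(X) denote the set of words of length at most n. Then a subset ε of F(X) × F(X) belongs to μ if and only if for every n ∈ ℕ the set ε ∩ (Bₙ × Bₙ) belongs to the trace of μ on Bₙ. -/
open Filter Set Topology Pointwise

universe u v

/-!
In a P-space the neighbourhood filter of a point is closed under countable intersections, and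
this passes to the left, right and two-sided uniformities, which are built from `𝓝 1` by
`comap` and `⊓`. If every `ε ∩ (Bₙ × Bₙ)` agrees on `Bₙ × Bₙ` with an entourage `δₙ`, then
`⋂ₙ δₙ` is an entourage, and it lies in `ε` because every pair of words lies in some `Bₙ × Bₙ`.
-/

theorem IsPSpace.countableInterFilter_nhds_s11 {Y : Type*} [TopologicalSpace Y] (hP : IsPSpace Y)
    (y : Y) : CountableInterFilter (𝓝 y) := by
  refine ⟨fun S hS hmem => ?_⟩
  rcases S.eq_empty_or_nonempty with rfl | hne
  · simp
  obtain ⟨s, rfl⟩ := hS.exists_eq_range hne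
  choose u hus hu hyu using fun n => mem_nhds_iff.1 (hmem (s n) (mem_range_self n))
  rw [sInter_range]
  exact mem_nhds_iff.2 ⟨⋂ n, u n, iInter_mono hus, hP u hu, mem_iInter.2 hyu⟩

theorem IsPSpace.countableInterFilter_unif {G : Type*} [Group G] [TopologicalSpace G]
    (hP : IsPSpace G) {μ : Filter (G × G)}
    (hμ : μ = leftUnif G ∨ μ = rightUnif G ∨ μ = twoSidedUnif G) : CountableInterFilter μ := by
  have := hP.countableInterFilter_nhds_s11 1
  have hl : CountableInterFilter (leftUnif G) := by unfold leftUnif; infer_instance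
  have hr : CountableInterFilter (rightUnif G) := by unfold rightUnif; infer_instance
  rcases hμ with rfl | rfl | rfl
  exacts [hl, hr, countableInterFilter_inf _ _]

theorem mem_iff_forall_memTrace {G : Type*} {μ : Filter (G × G)} [CountableInterFilter μ]
    {B : ℕ → Set G} (hB : ∀ p : G × G, ∃ n, p ∈ B n ×ˢ B n) {ε : Set (G × G)} :
    ε ∈ μ ↔ ∀ n, MemTrace μ (B n) (ε ∩ B n ×ˢ B n) := by
  refine ⟨fun hε n => ⟨ε, hε, by rw [inter_assoc, inter_self]⟩, fun h => ?_⟩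
  choose δ hδμ hδ using h
  refine mem_of_superset (countable_iInter_mem.2 hδμ) fun p hp => ?_
  obtain ⟨n, hpn⟩ := hB p
  have : p ∈ δ n ∩ B n ×ˢ B n := ⟨mem_iInter.1 hp n, hpn⟩
  rw [hδ n] at this
  exact this.1.1

theorem exists_mem_Bword_prod (X : Type*) [DecidableEq X] (p : FreeGroup X × FreeGroup X) :
    ∃ n, p ∈ Bword X n ×ˢ Bword X n :=
  let m := max p.1.toWord.length p.2.toWord.length
  ⟨m, (le_max_left _ _ : p.1.toWord.length ≤ m), (le_max_right _ _ : p.2.toWord.length ≤ m)⟩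

theorem mem_unif_iff_traces_general (X : Type*) [DecidableEq X]
    [TopologicalSpace (FreeGroup X)]
    (hP : IsPSpace (FreeGroup X)) (μ : Filter (FreeGroup X × FreeGroup X))
    (hμ : μ = leftUnif (FreeGroup X) ∨ μ = rightUnif (FreeGroup X) ∨
      μ = twoSidedUnif (FreeGroup X))
    (ε : Set (FreeGroup X × FreeGroup X)) :
    ε ∈ μ ↔ ∀ n : ℕ, MemTrace μ (Bword X n) (ε ∩ (Bword X n) ×ˢ (Bword X n)) :=
  have := hP.countableInterFilter_unif hμ
  mem_iff_forall_memTrace (exists_mem_Bword_prod X)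

/-- for a P-group topology on a free group, a subset of the square belongs to
the left (right, two-sided) uniformity iff all its restrictions to the balls `Bₙ` belong to
the corresponding trace uniformities. -/
theorem mem_unif_iff_traces (X : Type*) [DecidableEq X]
    [TopologicalSpace (FreeGroup X)] [IsTopologicalGroup (FreeGroup X)]
    (hP : IsPSpace (FreeGroup X)) (μ : Filter (FreeGroup X × FreeGroup X))
    (hμ : μ = leftUnif (FreeGroup X) ∨ μ = rightUnif (FreeGroup X) ∨
      μ = twoSidedUnif (FreeGroup X))
    (ε : Set (FreeGroup X × FreeGroup X)) :
    ε ∈ μ ↔ ∀ n : ℕ, MemTrace μ (Bword X n) (ε ∩ (Bword X n) ×ˢ (Bword X n)) :=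
  mem_unif_iff_traces_general X hP μ hμ ε
end

section
/- Let (X, U) be a uniform P-space and G = F(X, U) the uniform free topological group, and Bₙ the set of words of length ≤ n. If every Bₙ is functionally balanced, then G is functionally balanced. -/
open Filter Set Topology Pointwise

universe u v

/-!
Over a uniform P-space `X` the topology of `F(X)` is a P-group topology: its Gδ-modification
(neighbourhoods of `1` generated by countable intersections of old ones) is again a group
topology, and `X → F(X)` stays uniformly continuous for it because countable intersections of
entourages of `X` are entourages. By freeness the identity of `F(X)` is then continuous into
the Gδ-modification, so the two topologies coincide. In a P-group the right uniformity is closed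
under countable intersections, so the entourages witnessing right uniform continuity on the
balls `Bₙ` can be intersected into one entourage that works on `⋃ₙ Bₙ = F(X)`.
-/

namespace Filter

variable {α β : Type*}

theorem countableGenerate_le (l : Filter α) : countableGenerate l.sets ≤ l :=
  (countableGenerate_isGreatest l.sets).1.2

theorem tendsto_countableGenerate {u : α → β} {l : Filter α} [CountableInterFilter l]
    {l' : Filter β} (h : Tendsto u l l') : Tendsto u l (countableGenerate l'.sets) :=
  le_countableGenerate_iff_of_countableInterFilter.2 fun _ hs => h hs

theorem Tendsto.countableGenerate {u : α → β} {l : Filter α} {l' : Filter β}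
    (h : Tendsto u l l') : Tendsto u (countableGenerate l.sets) (countableGenerate l'.sets) :=
  tendsto_countableGenerate (h.mono_left (countableGenerate_le l))

theorem countableInterFilter_of_le_countableGenerate {l : Filter α}
    (h : l ≤ countableGenerate l.sets) : CountableInterFilter l := by
  rw [le_antisymm h (countableGenerate_le l)]
  infer_instance

theorem countableInterFilter_of_iInter_nat_mem {l : Filter α}
    (h : ∀ s : ℕ → Set α, (∀ n, s n ∈ l) → (⋂ n, s n) ∈ l) : CountableInterFilter l := by
  refine ⟨fun S hSc hS => ?_⟩
  rcases S.eq_empty_or_nonempty with rfl | hne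
  · simp
  obtain ⟨s, rfl⟩ := hSc.exists_eq_range hne
  rw [sInter_range]
  exact h s fun n => hS _ (mem_range_self n)

end Filter

theorem IsUniformPSpace.countableInterFilter {X : Type*} [UniformSpace X]
    (hP : IsUniformPSpace X) : CountableInterFilter (uniformity X) :=
  countableInterFilter_of_iInter_nat_mem hP

section PModification

variable (G : Type*) [Group G] [TopologicalSpace G] [IsTopologicalGroup G]

@[reducible]
def pModificationBasis : GroupFilterBasis G where
  toFilterBasis := (countableGenerate (𝓝 (1 : G)).sets).asBasis
  one' {U} hU := by
    obtain ⟨S, hSN, -, hSU⟩ := mem_countableGenerate_iff.1 hU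
    exact hSU (mem_sInter.2 fun s hs => mem_of_mem_nhds (hSN hs))
  mul' {U} hU := by
    obtain ⟨S, hSN, hSc, hSU⟩ := mem_countableGenerate_iff.1 hU
    choose! W hW hWmul using fun s (hs : s ∈ S) => exists_nhds_one_split (hSN hs)
    refine ⟨⋂ s ∈ S, W s,
      (countable_bInter_mem hSc).2 fun s hs => countableGenerate_le _ (hW s hs), ?_⟩
    rintro _ ⟨v, hv, w, hw, rfl⟩
    exact hSU (mem_sInter.2 fun s hs =>
      hWmul s hs v (mem_iInter₂.1 hv s hs) w (mem_iInter₂.1 hw s hs))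
  inv' {U} hU :=
    ⟨_, (continuous_inv.tendsto' (1 : G) 1 inv_one).countableGenerate hU, subset_rfl⟩
  conj' x₀ {U} hU := by
    have hconj : Tendsto (fun x : G => x₀ * x * x₀⁻¹) (𝓝 1) (𝓝 1) :=
      ((continuous_const_mul x₀).mul_const x₀⁻¹).tendsto' 1 1 (by simp)
    exact ⟨_, hconj.countableGenerate hU, subset_rfl⟩

theorem nhds_one_pModification :
    @nhds G (pModificationBasis G).topology 1 = countableGenerate (𝓝 (1 : G)).sets :=
  ((pModificationBasis G).nhds_one_eq).trans (asBasis_filter _)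

end PModification

section Uniformities

variable {G : Type*} [Group G] [TopologicalSpace G]

theorem tendsto_twoSidedUnif_iff {α : Type*} {l : Filter α} {g : α → G × G} :
    Tendsto g l (twoSidedUnif G) ↔
      Tendsto (fun a => (g a).1⁻¹ * (g a).2) l (𝓝 1) ∧
        Tendsto (fun a => (g a).1 * (g a).2⁻¹) l (𝓝 1) :=
  tendsto_inf.trans (and_congr tendsto_comap_iff tendsto_comap_iff)

instance [CountableInterFilter (𝓝 (1 : G))] : CountableInterFilter (rightUnif G) := by
  unfold rightUnif
  infer_instance

end Uniformities

theorem tendsto_twoSidedUnif_pModification {G : Type*} [Group G] [TopologicalSpace G]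
    [IsTopologicalGroup G] {α : Type*} {l : Filter α} [CountableInterFilter l] {g : α → G × G}
    (h : Tendsto g l (twoSidedUnif G)) :
    Tendsto g l (@twoSidedUnif G _ (pModificationBasis G).topology) := by
  rw [tendsto_twoSidedUnif_iff] at h
  rw [@tendsto_twoSidedUnif_iff _ _ (pModificationBasis G).topology, nhds_one_pModification]
  exact h.imp tendsto_countableGenerate tendsto_countableGenerate

theorem IsUniformFreeTopGroup.countableInterFilter_nhds_one {X : Type u} [UniformSpace X]
    [TopologicalSpace (FreeGroup X)] [IsTopologicalGroup (FreeGroup X)]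
    (hP : IsUniformPSpace X) (hF : IsUniformFreeTopGroup X) :
    CountableInterFilter (𝓝 (1 : FreeGroup X)) := by
  let B := pModificationBasis (FreeGroup X)
  have := hP.countableInterFilter
  have hcont : Continuous[_, B.topology] (FreeGroup.lift FreeGroup.of) :=
    @hF.2 _ _ B.topology B.isTopologicalGroup _ (tendsto_twoSidedUnif_pModification hF.1)
  rw [FreeGroup.lift_of_eq_id] at hcont
  refine countableInterFilter_of_le_countableGenerate ?_
  rw [← nhds_one_pModification]
  exact @Continuous.tendsto _ _ _ B.topology _ hcont 1

section Balanced

variable {G : Type*}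

theorem UCOn.comp_inclusion {μ : Filter (G × G)} {B C : Set G} {f : C → ℝ} (hf : UCOn μ C f)
    (h : B ⊆ C) : UCOn μ B (f ∘ inclusion h) :=
  fun e he => (hf e he).imp fun _ ⟨hδ, hfδ⟩ =>
    ⟨hδ, fun x y => hfδ (inclusion h x) (inclusion h y)⟩

theorem UCOn.univ_of_iUnion {μ : Filter (G × G)} [CountableInterFilter μ] {B : ℕ → Set G}
    (hB : Monotone B) (hcover : ⋃ n, B n = univ) {f : ↥(univ : Set G) → ℝ}
    (hf : ∀ n, UCOn μ (B n) (f ∘ inclusion (subset_univ _))) : UCOn μ univ f := by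
  intro e he
  choose δ hδ hfδ using fun n => hf n e he
  refine ⟨⋂ n, δ n, countable_iInter_mem.2 hδ, ?_⟩
  intro x y hxy
  obtain ⟨i, hx⟩ := iUnion_eq_univ_iff.1 hcover x
  obtain ⟨j, hy⟩ := iUnion_eq_univ_iff.1 hcover y
  exact hfδ (max i j) ⟨x, hB (le_max_left i j) hx⟩ ⟨y, hB (le_max_right i j) hy⟩
    (mem_iInter.1 hxy _)

theorem FunBalancedOn.univ_of_iUnion [Group G] [TopologicalSpace G]
    [CountableInterFilter (𝓝 (1 : G))] {B : ℕ → Set G} (hB : Monotone B)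
    (hcover : ⋃ n, B n = univ) (h : ∀ n, FunBalancedOn G (B n)) : FunBalancedOn G univ := by
  rintro f ⟨M, hM⟩ hleft
  exact UCOn.univ_of_iUnion hB hcover fun n =>
    h n _ ⟨M, fun _ => hM _⟩ (hleft.comp_inclusion _)

end Balanced

theorem bword_mono (X : Type*) [DecidableEq X] : Monotone (Bword X) :=
  fun _ _ hmn _ hw => le_trans hw hmn

theorem iUnion_bword (X : Type*) [DecidableEq X] : ⋃ n, Bword X n = univ :=
  iUnion_eq_univ_iff.2 fun w => ⟨w.toWord.length, le_refl w.toWord.length⟩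

/-- over a uniform P-space, if each ball `Bₙ` is functionally balanced, then
the uniform free topological group is functionally balanced. -/
theorem uniformFree_funBalanced_of_balls (X : Type u) [UniformSpace X] [DecidableEq X]
    [TopologicalSpace (FreeGroup X)] [IsTopologicalGroup (FreeGroup X)]
    (hP : IsUniformPSpace X) (hF : IsUniformFreeTopGroup X)
    (hballs : ∀ n : ℕ, FunBalancedOn (FreeGroup X) (Bword X n)) :
    FunBalancedOn (FreeGroup X) Set.univ := by
  have := hF.countableInterFilter_nhds_one hP
  exact FunBalancedOn.univ_of_iUnion (bword_mono X) (iUnion_bword X) hballs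
end
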